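/- arXiv:0711.3722 — 2 statements merged into one kernel-verified Lean document; each statement's English description precedes it below -/
import Mathlib

section
/- Let D be an extremally co-well-powered complete category. Then for every reduced projectively filtered object (X, Q) of D, the limit lim Q of the functor (Q, D) → D exists; moreover the subclass of Q consisting of extremal epimorphisms forms a full subcategory of (Q, D) that is initial, and it may be taken to be small. -/
/-!
Morphisms of `(Q, D)` out of an epimorphism are unique, so a class of epimorphisms in `Q` that
dominates every element of `Q` spans a thin, directed, hence cofiltered full subcategory, and such
a subcategory is initial. For the extremal epimorphisms domination is reducedness; extremal
co-well-poweredness cuts them down to a set of representatives that still dominates, and limits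
over this small initial subcategory exist by completeness.
-/

open CategoryTheory CategoryTheory.Limits

universe w v u v₂ u₂

namespace FilteredCats

variable {D : Type u} [Category.{v} D]

/-- The class of morphisms of `D` with source `X`. -/
def MorFrom (X : D) : Type (max u v) := Σ Y : D, X ⟶ Y

/-- `Dom δ₁ δ₂` means `δ₁ ≥ δ₂`: there is `h` with `h ∘ δ₁ = δ₂`. -/
def Dom {X : D} (δ₁ δ₂ : MorFrom X) : Prop :=
  ∃ h : δ₁.1 ⟶ δ₂.1, δ₁.2 ≫ h = δ₂.2

/-- A projective filtration on `X`: a nonempty, directed, saturated class of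
morphisms with source `X`. -/
structure ProjFilt (X : D) where
  carrier : Set (MorFrom X)
  nonempty' : carrier.Nonempty
  directed' : ∀ δ₁ ∈ carrier, ∀ δ₂ ∈ carrier, ∃ δ ∈ carrier, Dom δ δ₁ ∧ Dom δ δ₂
  saturated' : ∀ δ₁ ∈ carrier, ∀ δ₂, Dom δ₁ δ₂ → δ₂ ∈ carrier

/-- The pull back of a set of morphisms with source `X` along `f : X' ⟶ X`. -/
def pullSet {X' X : D} (f : X' ⟶ X) (S : Set (MorFrom X)) : Set (MorFrom X') :=
  {δ' | ∃ δ ∈ S, δ' = ⟨δ.1, f ≫ δ.2⟩}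

/-- The pull back of a projective filtration along `f : X' ⟶ X`. -/
def ProjFilt.pull {X' X : D} (f : X' ⟶ X) (P : ProjFilt X) : ProjFilt X' where
  carrier := pullSet f P.carrier
  nonempty' := by
    obtain ⟨δ, hδ⟩ := P.nonempty'
    exact ⟨⟨δ.1, f ≫ δ.2⟩, δ, hδ, rfl⟩
  directed' := by
    rintro _ ⟨δ₁, h₁, rfl⟩ _ ⟨δ₂, h₂, rfl⟩
    obtain ⟨δ, hδ, ⟨g₁, hg₁⟩, ⟨g₂, hg₂⟩⟩ := P.directed' δ₁ h₁ δ₂ h₂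
    exact ⟨⟨δ.1, f ≫ δ.2⟩, ⟨δ, hδ, rfl⟩,
      ⟨g₁, by simp [hg₁]⟩, ⟨g₂, by simp [hg₂]⟩⟩
  saturated' := by
    rintro _ ⟨δ, hδ, rfl⟩ δ₂ ⟨h, hh⟩
    refine ⟨⟨δ₂.1, δ.2 ≫ h⟩, P.saturated' δ hδ _ ⟨h, rfl⟩, ?_⟩
    obtain ⟨Y₂, g₂⟩ := δ₂
    have hg : g₂ = f ≫ (δ.2 ≫ h) := by simpa using hh.symm
    exact Sigma.ext rfl (heq_of_eq hg)

/-- A projectively filtered object of `D`. -/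
structure PObj (D : Type u) [Category.{v} D] where
  base : D
  filt : ProjFilt base

/-- A morphism of projectively filtered objects: a morphism of the underlying
objects such that the pull back of the target filtration is contained in the
source filtration. -/
structure PHom (A B : PObj D) : Type v where
  toHom : A.base ⟶ B.base
  mem : ∀ δ ∈ B.filt.carrier, (⟨δ.1, toHom ≫ δ.2⟩ : MorFrom A.base) ∈ A.filt.carrier

theorem PHom.ext' {A B : PObj D} {f g : PHom A B} (h : f.toHom = g.toHom) : f = g := by
  cases f; cases g; cases h; rfl

instance : Category.{v} (PObj D) where
  Hom := PHom
  id A := ⟨𝟙 A.base, fun δ hδ => by simp only [Category.id_comp]; exact hδ⟩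
  comp {A B C} f g := ⟨f.toHom ≫ g.toHom, fun δ hδ => by
    have h1 := g.mem δ hδ
    have h2 := f.mem _ h1
    simpa using h2⟩
  id_comp f := PHom.ext' (Category.id_comp _)
  comp_id f := PHom.ext' (Category.comp_id _)
  assoc f g h := PHom.ext' (Category.assoc _ _ _)

@[simp] theorem PObj.id_toHom (A : PObj D) : PHom.toHom (𝟙 A) = 𝟙 A.base := rfl
@[simp] theorem PObj.comp_toHom {A B C : PObj D} (f : A ⟶ B) (g : B ⟶ C) :
    PHom.toHom (f ≫ g) = PHom.toHom f ≫ PHom.toHom g := rfl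

/-- The forgetful functor `PD → D`. -/
def Pforget (D : Type u) [Category.{v} D] : PObj D ⥤ D where
  obj A := A.base
  map f := PHom.toHom f

/-- The discrete filtration functor `D → PD`, `X ↦ (X, M(X))`. -/
def Pdiscrete (D : Type u) [Category.{v} D] : D ⥤ PObj D where
  obj X :=
    { base := X
      filt :=
        { carrier := Set.univ
          nonempty' := ⟨⟨X, 𝟙 X⟩, trivial⟩
          directed' := fun δ₁ _ δ₂ _ =>
            ⟨⟨X, 𝟙 X⟩, trivial, ⟨δ₁.2, Category.id_comp _⟩, ⟨δ₂.2, Category.id_comp _⟩⟩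
          saturated' := fun _ _ _ _ => trivial } }
  map f := ⟨f, fun _ _ => trivial⟩

/-- The functor `PD → PE` induced by a functor `G : D → E`. -/
def Pfunctor {E : Type u₂} [Category.{v₂} E] (G : D ⥤ E) : PObj D ⥤ PObj E where
  obj A :=
    { base := G.obj A.base
      filt :=
        { carrier := {δ' | ∃ δ ∈ A.filt.carrier,
            Dom (⟨G.obj δ.1, G.map δ.2⟩ : MorFrom (G.obj A.base)) δ'}
          nonempty' := by
            obtain ⟨δ, hδ⟩ := A.filt.nonempty'
            exact ⟨⟨G.obj δ.1, G.map δ.2⟩, δ, hδ, ⟨𝟙 _, Category.comp_id _⟩⟩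
          directed' := by
            rintro δ'₁ ⟨δ₁, h₁, g₁, hg₁⟩ δ'₂ ⟨δ₂, h₂, g₂, hg₂⟩
            obtain ⟨δ, hδ, ⟨k₁, hk₁⟩, ⟨k₂, hk₂⟩⟩ := A.filt.directed' δ₁ h₁ δ₂ h₂
            refine ⟨⟨G.obj δ.1, G.map δ.2⟩, ⟨δ, hδ, ⟨𝟙 _, Category.comp_id _⟩⟩,
              ⟨G.map k₁ ≫ g₁, ?_⟩, ⟨G.map k₂ ≫ g₂, ?_⟩⟩
            · rw [← Category.assoc, ← G.map_comp, hk₁, hg₁]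
            · rw [← Category.assoc, ← G.map_comp, hk₂, hg₂]
          saturated' := by
            rintro δ'₁ ⟨δ, hδ, g, hg⟩ δ'₂ ⟨h, hh⟩
            exact ⟨δ, hδ, ⟨g ≫ h, by rw [← Category.assoc, hg, hh]⟩⟩ } }
  map {A B} f :=
    ⟨G.map (PHom.toHom f), by
      rintro δ' ⟨δ, hδ, g, hg⟩
      exact ⟨⟨δ.1, PHom.toHom f ≫ δ.2⟩, f.mem δ hδ,
        ⟨g, by rw [← hg, ← Category.assoc, ← G.map_comp]⟩⟩⟩
  map_id A := PHom.ext' (G.map_id _)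
  map_comp f g := PHom.ext' (G.map_comp _ _)

/-- An extremal epimorphism: an epimorphism such that in any factorisation
through a monomorphism, the monomorphism is an isomorphism. -/
def ExtremalEpi {C : Type u₂} [Category.{v₂} C] {X Y : C} (e : X ⟶ Y) : Prop :=
  Epi e ∧ ∀ ⦃Z : C⦄ (g : X ⟶ Z) (m : Z ⟶ Y), Mono m → g ≫ m = e → IsIso m

/-- An (extremal epi, mono) category: every morphism factors as an extremal
epimorphism followed by a monomorphism and such factorisations have the
diagonal fill-in property. -/
structure EMCat (C : Type u₂) [Category.{v₂} C] : Prop where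
  fact : ∀ {X Y : C} (f : X ⟶ Y), ∃ (Z : C) (e : X ⟶ Z) (m : Z ⟶ Y),
    ExtremalEpi e ∧ Mono m ∧ e ≫ m = f
  diag : ∀ {A B Z X : C} (e : A ⟶ B) (m : Z ⟶ X) (g : A ⟶ Z) (h : B ⟶ X),
    ExtremalEpi e → Mono m → g ≫ m = e ≫ h → ∃ d : B ⟶ Z, e ≫ d = g ∧ d ≫ m = h

/-- A projective filtration is reduced if it has an initial subclass of
extremal epimorphisms. -/
def ProjFilt.Reduced {X : D} (P : ProjFilt X) : Prop :=
  ∀ δ ∈ P.carrier, ∃ ε ∈ P.carrier, ExtremalEpi ε.2 ∧ Dom ε δ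

/-- The category of reduced projectively filtered objects of `D`. -/
def QObj (D : Type u) [Category.{v} D] := ObjectProperty.FullSubcategory (fun A : PObj D => A.filt.Reduced)

instance : Category.{v} (QObj D) := ObjectProperty.FullSubcategory.category _

/-- The inclusion functor `QD → PD`. -/
def qpInclusion (D : Type u) [Category.{v} D] : QObj D ⥤ PObj D :=
  ObjectProperty.ι _

/-- A category is extremally co-well-powered if every object has, up to
isomorphism, only a (small) set of extremal epimorphisms out of it. -/
def ECWP (C : Type u₂) [Category.{v₂} C] : Prop :=
  ∀ X : C, ∃ (ι : Type v₂) (Y : ι → C) (e : ∀ i, X ⟶ Y i),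
    (∀ i, ExtremalEpi (e i)) ∧
    ∀ ⦃Z : C⦄ (f : X ⟶ Z), ExtremalEpi f → ∃ (i : ι) (φ : Y i ≅ Z), e i ≫ φ.hom = f

/-- The category `(P, D)` associated to a projective filtration: objects are the
elements of `P`, morphisms `δ₁ → δ₂` are morphisms `g` of `D` with `g ∘ δ₁ = δ₂`. -/
def FiltCat {X : D} (P : ProjFilt X) : Type (max u v) := {δ : MorFrom X // δ ∈ P.carrier}

instance {X : D} (P : ProjFilt X) : Category.{v} (FiltCat P) where
  Hom δ₁ δ₂ := {g : δ₁.1.1 ⟶ δ₂.1.1 // δ₁.1.2 ≫ g = δ₂.1.2}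
  id δ := ⟨𝟙 _, Category.comp_id _⟩
  comp f g := ⟨f.1 ≫ g.1, by rw [← Category.assoc, f.2, g.2]⟩
  id_comp f := Subtype.ext (Category.id_comp _)
  comp_id f := Subtype.ext (Category.comp_id _)
  assoc f g h := Subtype.ext (Category.assoc _ _ _)

/-- The functor `(P, D) → D` sending an element of the filtration to its target. -/
def FiltDiagram {X : D} (P : ProjFilt X) : FiltCat P ⥤ D where
  obj δ := δ.1.1
  map g := g.1

/-- The canonical cone on the diagram of a projective filtration, with apex the
underlying object. -/
def filtCone {X : D} (P : ProjFilt X) : Limits.Cone (FiltDiagram P) where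
  pt := X
  π :=
    { app := fun δ => δ.1.2
      naturality := fun δ₁ δ₂ g => by
        have := g.2
        dsimp [FiltDiagram] at *
        simp [this] }

/-- A reduced projective filtration is an iso-filtration if the canonical cone
on its diagram is a limit cone, i.e. the limit exists and the canonical morphism
from the underlying object to it is an isomorphism. -/
def IsoFilt {X : D} (P : ProjFilt X) : Prop :=
  Nonempty (Limits.IsLimit (filtCone P))

/-- The category of iso-filtered objects of `D`. -/
def KObj (D : Type u) [Category.{v} D] :=
  ObjectProperty.FullSubcategory (fun A : QObj D => IsoFilt A.obj.filt)

instance : Category.{v} (KObj D) := ObjectProperty.FullSubcategory.category _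

/-- The inclusion functor `KD → QD`. -/
def kqInclusion (D : Type u) [Category.{v} D] : KObj D ⥤ QObj D :=
  ObjectProperty.ι _

/-- The forgetful functor `KD → D`. -/
def Kforget (D : Type u) [Category.{v} D] : KObj D ⥤ D :=
  kqInclusion D ⋙ qpInclusion D ⋙ Pforget D

/-- The smallest projective filtration containing a class of morphisms
(as a class). -/
def genSet {X : D} (S : Set (MorFrom X)) : Set (MorFrom X) :=
  {δ | ∀ P : ProjFilt X, S ⊆ P.carrier → δ ∈ P.carrier}

/-- The reduction of a class of morphisms: the saturation of the class of
extremal epimorphism parts of (extremal epi, mono)-factorisations of its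
elements. -/
def redSet {X : D} (S : Set (MorFrom X)) : Set (MorFrom X) :=
  {δ | ∃ ε : MorFrom X, ExtremalEpi ε.2 ∧
    (∃ δ' ∈ S, ∃ m : ε.1 ⟶ δ'.1, Mono m ∧ ε.2 ≫ m = δ'.2) ∧ Dom ε δ}

/-- The push forward of a filtration class along `f` (single morphism case). -/
def pushSet {X Y : D} (f : X ⟶ Y) (S : Set (MorFrom X)) : Set (MorFrom Y) :=
  {g | (⟨g.1, f ≫ g.2⟩ : MorFrom X) ∈ S}

/-- The discrete filtration on an object, as an iso-filtered object. -/
def kDiscreteObj (X : D) : KObj D where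
  obj :=
    { obj := (Pdiscrete D).obj X
      property := fun δ _ => ⟨⟨X, 𝟙 X⟩, trivial,
        ⟨(inferInstance : Epi (𝟙 X)), fun _ g m hm hgm => by
          haveI : IsSplitEpi m := ⟨⟨⟨g, hgm⟩⟩⟩
          exact isIso_of_mono_of_isSplitEpi m⟩,
        ⟨δ.2, Category.id_comp _⟩⟩ }
  property := ⟨{
    lift := fun c => c.π.app ⟨⟨X, 𝟙 X⟩, trivial⟩
    fac := fun c j => by
      have h := c.π.naturality (X := ⟨⟨X, 𝟙 X⟩, trivial⟩) (Y := j)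
        ⟨j.1.2, Category.id_comp _⟩
      dsimp [FiltDiagram, filtCone] at h ⊢
      exact h.symm.trans (Category.id_comp _)
    uniq := fun c m hm => by
      have h := hm ⟨⟨X, 𝟙 X⟩, trivial⟩
      rw [← Category.comp_id m]
      exact h }⟩

/-- The discrete filtration functor `D → KD`. -/
def kDiscrete (D : Type u) [Category.{v} D] : D ⥤ KObj D where
  obj X := kDiscreteObj X
  map f := ⟨f, fun _ _ => trivial⟩
  map_id _ := rfl
  map_comp _ _ := rfl

/-- The morphism in `KD` from an iso-filtered object to the discrete object on
the target of an element of its filtration. -/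
def kToDiscrete {A : KObj D} (δ : MorFrom A.obj.obj.base)
    (hδ : δ ∈ A.obj.obj.filt.carrier) : A ⟶ kDiscreteObj δ.1 :=
  ⟨⟨show PHom A.obj.obj ((kDiscreteObj δ.1).obj.obj) from
    ⟨δ.2, fun γ _ => A.obj.obj.filt.saturated' δ hδ _ ⟨γ.2, rfl⟩⟩⟩⟩

/-- The natural transformation `P(G) → P(H)` induced by `ν : G → H`. -/
def Pnat {E : Type u₂} [Category.{v₂} E] {G H : D ⥤ E} (ν : G ⟶ H) :
    Pfunctor G ⟶ Pfunctor H where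
  app A :=
    ⟨ν.app A.base, by
      rintro δ' ⟨δ, hδ, g, hg⟩
      exact ⟨δ, hδ, ⟨ν.app δ.1 ≫ g, by
        rw [← Category.assoc, ν.naturality, Category.assoc, hg]; rfl⟩⟩⟩
  naturality {A B} f := PHom.ext' (ν.naturality (PHom.toHom f))

namespace FiltCat

variable {X : D} {P : ProjFilt X}

theorem nonempty_hom_iff_dom {δ₁ δ₂ : FiltCat P} : Nonempty (δ₁ ⟶ δ₂) ↔ Dom δ₁.1 δ₂.1 :=
  ⟨fun ⟨g⟩ => ⟨g.1, g.2⟩, fun ⟨g, hg⟩ => ⟨⟨g, hg⟩⟩⟩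

theorem hom_ext_of_epi {δ₁ δ₂ : FiltCat P} (h : Epi δ₁.1.2) (f g : δ₁ ⟶ δ₂) : f = g :=
  Subtype.ext ((cancel_epi δ₁.1.2).1 (f.2.trans g.2.symm))

theorem exists_cone_objs (δ₁ δ₂ : FiltCat P) :
    ∃ δ : FiltCat P, Nonempty (δ ⟶ δ₁) ∧ Nonempty (δ ⟶ δ₂) := by
  obtain ⟨δ, hδ, h₁, h₂⟩ := P.directed' δ₁.1 δ₁.2 δ₂.1 δ₂.2
  exact ⟨⟨δ, hδ⟩, nonempty_hom_iff_dom.2 h₁, nonempty_hom_iff_dom.2 h₂⟩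

variable (T : ObjectProperty (FiltCat P))

theorem isCofilteredOrEmpty_fullSubcategory (hepi : ∀ δ, T δ → Epi δ.1.2)
    (hdom : ∀ δ, ∃ ε, T ε ∧ Nonempty (ε ⟶ δ)) : IsCofilteredOrEmpty T.FullSubcategory where
  cone_objs ε₁ ε₂ := by
    obtain ⟨δ, ⟨f₁⟩, ⟨f₂⟩⟩ := exists_cone_objs ε₁.obj ε₂.obj
    obtain ⟨ε, hε, ⟨g⟩⟩ := hdom δ
    exact ⟨⟨ε, hε⟩, ObjectProperty.homMk (g ≫ f₁), ObjectProperty.homMk (g ≫ f₂), trivial⟩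
  cone_maps ε₁ _ f g :=
    ⟨ε₁, 𝟙 ε₁, congrArg _ (T.hom_ext (hom_ext_of_epi (hepi _ ε₁.property) f.hom g.hom))⟩

theorem initial_ι (hepi : ∀ δ, T δ → Epi δ.1.2) (hdom : ∀ δ, ∃ ε, T ε ∧ Nonempty (ε ⟶ δ)) :
    (ObjectProperty.ι T).Initial :=
  have := isCofilteredOrEmpty_fullSubcategory T hepi hdom
  Functor.initial_of_exists_of_isCofiltered _
    (fun δ => by
      obtain ⟨ε, hε, hεδ⟩ := hdom δ
      exact ⟨⟨ε, hε⟩, hεδ⟩)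
    (fun {_} {ε} s s' => ⟨ε, 𝟙 ε, by rw [hom_ext_of_epi (hepi _ ε.property) s s']⟩)

end FiltCat

theorem ProjFilt.Reduced.exists_extremalEpi_hom {X : D} {P : ProjFilt X} (hP : P.Reduced)
    (δ : FiltCat P) : ∃ ε : FiltCat P, ExtremalEpi ε.1.2 ∧ Nonempty (ε ⟶ δ) := by
  obtain ⟨ε, hε, hext, hεδ⟩ := hP δ.1 δ.2
  exact ⟨⟨ε, hε⟩, hext, FiltCat.nonempty_hom_iff_dom.2 hεδ⟩

theorem ECWP.exists_small_representatives (hecwp : ECWP D) (X : D) :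
    ∃ S : Set (MorFrom X), Small.{v} S ∧ (∀ e ∈ S, ExtremalEpi e.2) ∧
      ∀ f : MorFrom X, ExtremalEpi f.2 → ∃ e ∈ S, Dom e f ∧ Dom f e := by
  obtain ⟨ι, Y, e, hext, hrep⟩ := hecwp X
  refine ⟨Set.range fun i => (⟨Y i, e i⟩ : MorFrom X), small_range _, ?_, ?_⟩
  · rintro _ ⟨i, rfl⟩
    exact hext i
  · intro f hf
    obtain ⟨i, φ, hφ⟩ := hrep f.2 hf
    exact ⟨_, ⟨i, rfl⟩, ⟨φ.hom, hφ⟩, ⟨φ.inv, by rw [← hφ, Category.assoc, φ.hom_inv_id,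
      Category.comp_id]⟩⟩

theorem ProjFilt.Reduced.exists_small_extremalEpi_weakly_initial_set {X : D} {P : ProjFilt X}
    (hP : P.Reduced) (hecwp : ECWP D) :
    ∃ S : Set (FiltCat P), (∀ δ ∈ S, ExtremalEpi δ.1.2) ∧ Small.{v} S ∧
      ∀ δ, ∃ ε ∈ S, Nonempty (ε ⟶ δ) := by
  obtain ⟨R, hRsmall, hRext, hRrep⟩ := hecwp.exists_small_representatives X
  refine ⟨Subtype.val ⁻¹' R, fun δ hδ => hRext δ.1 hδ,
    small_of_injective (f := fun δ => (⟨δ.1.1, δ.2⟩ : R)) ?_, fun δ => ?_⟩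
  · intro δ₁ δ₂ h
    exact Subtype.ext (Subtype.ext (congrArg (·.1) h))
  · obtain ⟨ε, hext, ⟨f⟩⟩ := hP.exists_extremalEpi_hom δ
    obtain ⟨e, he, hef, hfe⟩ := hRrep ε.1 hext
    obtain ⟨g, hg⟩ := hef
    exact ⟨⟨e, P.saturated' ε.1 ε.2 e hfe⟩, he, ⟨⟨g, hg⟩ ≫ f⟩⟩

/-- in an extremally co-well-powered complete category every
reduced projectively filtered object has a limit; the extremal epimorphisms in
the filtration form an initial full subcategory of `(Q, D)`, and it may be
taken to be small. -/
theorem reduced_filtration_has_limit [Limits.HasLimits D] (hecwp : ECWP D) :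
    ∀ (X : D) (P : ProjFilt X), P.Reduced →
      Limits.HasLimit (FiltDiagram P) ∧
      (ObjectProperty.ι (fun δ : FiltCat P => ExtremalEpi δ.1.2)).Initial ∧
      ∃ S : Set (FiltCat P), (∀ δ ∈ S, ExtremalEpi δ.1.2) ∧ Small.{v} S ∧
        (ObjectProperty.ι (fun δ : FiltCat P => δ ∈ S)).Initial := by
  intro X P hP
  obtain ⟨S, hSext, hSsmall, hSinit⟩ := hP.exists_small_extremalEpi_weakly_initial_set hecwp
  have hS : (ObjectProperty.ι (fun δ : FiltCat P => δ ∈ S)).Initial :=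
    FiltCat.initial_ι _ (fun δ hδ => (hSext δ hδ).1) hSinit
  have hE : (ObjectProperty.ι (fun δ : FiltCat P => ExtremalEpi δ.1.2)).Initial :=
    FiltCat.initial_ι _ (fun _ h => h.1) hP.exists_extremalEpi_hom
  refine ⟨?_, hE, S, hSext, hSsmall, hS⟩
  have := initiallySmall_of_initial_of_essentiallySmall.{v}
    (ObjectProperty.ι (fun δ : FiltCat P => δ ∈ S))
  have := hasLimitsOfShape_of_initiallySmall.{v} (FiltCat P) D
  infer_instance

end FilteredCats
end

section
/- Let D be a complete, cocomplete, extremally co-well-powered, (extremal epi, mono) category. Then KD is complete and cocomplete. -/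
open CategoryTheory CategoryTheory.Limits

universe w v u v₂ u₂

namespace FilteredCats

variable {D : Type u} [Category.{v} D]

/-!
`PD` is complete and cocomplete: a limit of underlying objects carries the filtration generated by
the pulled back filtrations, a colimit the morphisms whose restriction to every component lies in
that component's filtration. Reduction is right adjoint to the inclusion `QD → PD`, so `QD` is
coreflective in `PD` and inherits its limits and colimits.

A reduced filtration `Q` on `X` has a limit: its diagram is cofiltered (parallel arrows are
equalised by an extremal epimorphism of `Q`), and by extremal co-well-poweredness the extremal
epimorphisms in `Q` form an essentially small initial family. Filtering `lim Q` by the morphisms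
that factor through a limit projection gives an iso-filtered object, which is the reflection of
`(X, Q)` into `KD`. A reflective subcategory of a complete and cocomplete category is complete
and cocomplete.
-/

noncomputable section

theorem Dom.refl {X : D} (δ : MorFrom X) : Dom δ δ := ⟨𝟙 _, Category.comp_id _⟩

theorem Dom.trans {X : D} {δ₁ δ₂ δ₃ : MorFrom X} (h₁₂ : Dom δ₁ δ₂) (h₂₃ : Dom δ₂ δ₃) :
    Dom δ₁ δ₃ := by
  obtain ⟨g, hg⟩ := h₁₂
  obtain ⟨k, hk⟩ := h₂₃
  exact ⟨g ≫ k, by rw [← Category.assoc, hg, hk]⟩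

@[ext]
theorem PObj.hom_ext {A B : PObj D} {f g : A ⟶ B} (h : f.toHom = g.toHom) : f = g :=
  PHom.ext' h

@[simp] theorem Pforget_obj (A : PObj D) : (Pforget D).obj A = A.base := rfl
@[simp] theorem Pforget_map {A B : PObj D} (f : A ⟶ B) : (Pforget D).map f = f.toHom := rfl

theorem cone_π_comp {X : D} {P : ProjFilt X} (s : Cone (FiltDiagram P)) {a b : FiltCat P}
    (g : a.1.1 ⟶ b.1.1) (hg : a.1.2 ≫ g = b.1.2) : s.π.app a ≫ g = s.π.app b :=
  s.w ⟨g, hg⟩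

theorem ExtremalEpi.of_comp {X Y Z : D} {f : X ⟶ Y} {g : Y ⟶ Z} {e : X ⟶ Z} (he : ExtremalEpi e)
    (hfg : f ≫ g = e) : ExtremalEpi g := by
  subst hfg
  have := he.1
  refine ⟨epi_of_epi f g, fun W k m hm hkm => he.2 (f ≫ k) m hm ?_⟩
  rw [Category.assoc, hkm]

theorem ProjFilt.terminal_mem [HasTerminal D] {X : D} (P : ProjFilt X) (t : X ⟶ ⊤_ D) :
    (⟨⊤_ D, t⟩ : MorFrom X) ∈ P.carrier := by
  obtain ⟨δ, hδ⟩ := P.nonempty'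
  exact P.saturated' δ hδ _ ⟨terminal.from δ.1, terminal.hom_ext _ _⟩

theorem ProjFilt.prod_lift_mem [HasBinaryProducts D] {X : D} (P : ProjFilt X) {δ₁ δ₂ : MorFrom X}
    (h₁ : δ₁ ∈ P.carrier) (h₂ : δ₂ ∈ P.carrier) :
    (⟨δ₁.1 ⨯ δ₂.1, prod.lift δ₁.2 δ₂.2⟩ : MorFrom X) ∈ P.carrier := by
  obtain ⟨δ, hδ, ⟨g₁, hg₁⟩, ⟨g₂, hg₂⟩⟩ := P.directed' δ₁ h₁ δ₂ h₂
  exact P.saturated' δ hδ _ ⟨prod.lift g₁ g₂, by rw [prod.comp_lift, hg₁, hg₂]⟩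

theorem ProjFilt.mem_of_eq {X Y : D} (P : ProjFilt X) {f g : X ⟶ Y} (h : f = g)
    (hf : (⟨Y, f⟩ : MorFrom X) ∈ P.carrier) : (⟨Y, g⟩ : MorFrom X) ∈ P.carrier :=
  h ▸ hf

section FiniteProducts

variable [HasTerminal D] [HasBinaryProducts D]

def ProjFilt.ofProd {X : D} (S : Set (MorFrom X))
    (terminal_mem : (⟨⊤_ D, terminal.from X⟩ : MorFrom X) ∈ S)
    (prod_lift_mem : ∀ δ₁ ∈ S, ∀ δ₂ ∈ S, (⟨δ₁.1 ⨯ δ₂.1, prod.lift δ₁.2 δ₂.2⟩ : MorFrom X) ∈ S)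
    (saturated : ∀ δ₁ ∈ S, ∀ δ₂, Dom δ₁ δ₂ → δ₂ ∈ S) : ProjFilt X where
  carrier := S
  nonempty' := ⟨_, terminal_mem⟩
  directed' δ₁ h₁ δ₂ h₂ :=
    ⟨_, prod_lift_mem δ₁ h₁ δ₂ h₂, ⟨prod.fst, prod.lift_fst _ _⟩, ⟨prod.snd, prod.lift_snd _ _⟩⟩
  saturated' := saturated

def ProjFilt.iInf {X : D} {ι : Sort*} (P : ι → ProjFilt X) : ProjFilt X :=
  ProjFilt.ofProd {δ | ∀ i, δ ∈ (P i).carrier}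
    (fun i => (P i).terminal_mem _)
    (fun _ h₁ _ h₂ i => (P i).prod_lift_mem (h₁ i) (h₂ i))
    (fun δ₁ h₁ δ₂ hd i => (P i).saturated' δ₁ (h₁ i) δ₂ hd)

def genFilt {X : D} (S : Set (MorFrom X)) : ProjFilt X :=
  ProjFilt.iInf fun P : {P : ProjFilt X // S ⊆ P.carrier} => P.1

theorem subset_genFilt {X : D} (S : Set (MorFrom X)) : S ⊆ (genFilt S).carrier :=
  fun _ hδ P => P.2 hδ

theorem genFilt_subset {X : D} {S : Set (MorFrom X)} {P : ProjFilt X} (h : S ⊆ P.carrier) :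
    (genFilt S).carrier ⊆ P.carrier :=
  fun _ hδ => hδ ⟨P, h⟩

def pushFilt {X Y : D} (f : X ⟶ Y) (P : ProjFilt X) : ProjFilt Y :=
  ProjFilt.ofProd (pushSet f P.carrier) (P.terminal_mem _)
    (fun _ h₁ _ h₂ => P.saturated' _ (P.prod_lift_mem h₁ h₂) _ ⟨𝟙 _, by simp⟩)
    (fun _ h₁ _ ⟨k, hk⟩ => P.saturated' _ h₁ _ ⟨k, by rw [Category.assoc, hk]⟩)

end FiniteProducts

theorem subset_redSet (hEM : EMCat D) {X : D} (S : Set (MorFrom X)) : S ⊆ redSet S := by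
  intro δ hδ
  obtain ⟨Z, e, m, he, hm, hem⟩ := hEM.fact δ.2
  exact ⟨⟨Z, e⟩, he, ⟨δ, hδ, m, hm, hem⟩, ⟨m, hem⟩⟩

theorem EMCat.dom_of_comp_eq (hEM : EMCat D) {X Z E W : D} {e : X ⟶ Z} (he : ExtremalEpi e)
    {ε : X ⟶ E} {m : E ⟶ W} (hm : Mono m) {h : Z ⟶ W} (heq : e ≫ h = ε ≫ m) :
    Dom ⟨Z, e⟩ ⟨E, ε⟩ := by
  obtain ⟨d, hd, -⟩ := hEM.diag e m ε h he hm heq.symm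
  exact ⟨d, hd⟩

def ProjFilt.red (hEM : EMCat D) {X : D} (P : ProjFilt X) : ProjFilt X where
  carrier := redSet P.carrier
  nonempty' := P.nonempty'.mono (subset_redSet hEM _)
  directed' := by
    rintro δ₁ ⟨ε₁, -, ⟨δ'₁, hδ'₁, m₁, hm₁, hεm₁⟩, hd₁⟩ δ₂ ⟨ε₂, -, ⟨δ'₂, hδ'₂, m₂, hm₂, hεm₂⟩, hd₂⟩
    obtain ⟨δ, hδ, ⟨h₁, hh₁⟩, ⟨h₂, hh₂⟩⟩ := P.directed' δ'₁ hδ'₁ δ'₂ hδ'₂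
    obtain ⟨Z, e, m, he, hm, hem⟩ := hEM.fact δ.2
    have dom₁ := hEM.dom_of_comp_eq he hm₁ (h := m ≫ h₁)
      (by rw [hεm₁, ← hh₁, ← hem, Category.assoc])
    have dom₂ := hEM.dom_of_comp_eq he hm₂ (h := m ≫ h₂)
      (by rw [hεm₂, ← hh₂, ← hem, Category.assoc])
    exact ⟨⟨Z, e⟩, ⟨⟨Z, e⟩, he, ⟨δ, hδ, m, hm, hem⟩, Dom.refl _⟩, dom₁.trans hd₁, dom₂.trans hd₂⟩
  saturated' := by
    rintro δ₁ ⟨ε, he, hε, hd⟩ δ₂ hd₂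
    exact ⟨ε, he, hε, hd.trans hd₂⟩

theorem ProjFilt.red_reduced (hEM : EMCat D) {X : D} (P : ProjFilt X) : (P.red hEM).Reduced := by
  rintro δ ⟨ε, he, hε, hd⟩
  exact ⟨ε, ⟨ε, he, hε, Dom.refl _⟩, he, hd⟩

theorem redSet_subset_pushSet (hEM : EMCat D) {X Y : D} {f : X ⟶ Y} {P : Set (MorFrom Y)}
    {Q : ProjFilt X} (hQ : Q.Reduced) (h : P ⊆ pushSet f Q.carrier) :
    redSet P ⊆ pushSet f Q.carrier := by
  rintro δ ⟨ε, -, ⟨δ', hδ', m, hm, hεm⟩, k, hk⟩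
  obtain ⟨ε', hε', he', h', hh'⟩ := hQ _ (h hδ')
  have hfε : (⟨ε.1, f ≫ ε.2⟩ : MorFrom X) ∈ Q.carrier :=
    Q.saturated' ε' hε' _ (hEM.dom_of_comp_eq he' hm (by rw [hh', Category.assoc, hεm]))
  exact Q.saturated' _ hfε _ ⟨k, by rw [Category.assoc, hk]⟩

namespace PObj

section Limits

variable [HasLimits D] {J : Type v} [Category.{v} J] (F : J ⥤ PObj D)

def limitGenerators : Set (MorFrom (limit (F ⋙ Pforget D))) :=
  ⋃ j, pullSet (limit.π (F ⋙ Pforget D) j) (F.obj j).filt.carrier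

def limitCone : Cone F where
  pt := ⟨limit (F ⋙ Pforget D), genFilt (limitGenerators F)⟩
  π :=
    { app j := ⟨limit.π (F ⋙ Pforget D) j,
        fun δ hδ => subset_genFilt _ (Set.mem_iUnion.2 ⟨j, δ, hδ, rfl⟩)⟩
      naturality j j' u := by
        ext
        simpa using (limit.w (F ⋙ Pforget D) u).symm }

def isLimitLimitCone : IsLimit (limitCone F) where
  lift s := ⟨limit.lift (F ⋙ Pforget D) ((Pforget D).mapCone s), by
    refine genFilt_subset (P := pushFilt _ s.pt.filt) ?_
    rintro _ ⟨_, ⟨j, rfl⟩, ⟨Y, g⟩, hg, rfl⟩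
    exact s.pt.filt.mem_of_eq (by dsimp only; erw [limit.lift_π_assoc]; rfl) ((s.π.app j).mem _ hg)⟩
  fac s j := by
    ext
    exact limit.lift_π _ j
  uniq s m hm := by
    ext
    refine limit.hom_ext fun j => ?_
    exact (congrArg PHom.toHom (hm j)).trans (limit.lift_π ((Pforget D).mapCone s) j).symm

end Limits

section Colimits

variable [HasTerminal D] [HasBinaryProducts D] [HasColimits D] {J : Type v} [Category.{v} J]
  (F : J ⥤ PObj D)

def colimitCocone : Cocone F where
  pt := ⟨colimit (F ⋙ Pforget D),
    ProjFilt.iInf fun j => pushFilt (colimit.ι (F ⋙ Pforget D) j) (F.obj j).filt⟩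
  ι :=
    { app j := ⟨colimit.ι (F ⋙ Pforget D) j, fun _ hδ => hδ j⟩
      naturality j j' u := by
        ext
        simpa using colimit.w (F ⋙ Pforget D) u }

def isColimitColimitCocone : IsColimit (colimitCocone F) where
  desc s := ⟨colimit.desc (F ⋙ Pforget D) ((Pforget D).mapCocone s), fun ⟨_, _⟩ hg j =>
    (F.obj j).filt.mem_of_eq (by dsimp only; erw [colimit.ι_desc_assoc]; rfl)
      ((s.ι.app j).mem _ hg)⟩
  fac s j := by
    ext
    exact colimit.ι_desc _ j
  uniq s m hm := by
    ext
    refine colimit.hom_ext fun j => ?_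
    exact (congrArg PHom.toHom (hm j)).trans (colimit.ι_desc ((Pforget D).mapCocone s) j).symm

end Colimits

theorem hasLimits [HasLimits D] : HasLimits (PObj D) :=
  ⟨fun _ _ => ⟨fun F => HasLimit.mk ⟨limitCone F, isLimitLimitCone F⟩⟩⟩

theorem hasColimits [HasTerminal D] [HasBinaryProducts D] [HasColimits D] : HasColimits (PObj D) :=
  ⟨fun _ _ => ⟨fun F => HasColimit.mk ⟨colimitCocone F, isColimitColimitCocone F⟩⟩⟩

end PObj

namespace QObj

instance : (qpInclusion D).Full := ObjectProperty.full_ι _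
instance : (qpInclusion D).Faithful := ObjectProperty.faithful_ι _

def red (hEM : EMCat D) (B : PObj D) : QObj D :=
  ⟨⟨B.base, B.filt.red hEM⟩, B.filt.red_reduced hEM⟩

def homEquivRed (hEM : EMCat D) (A : QObj D) (B : PObj D) :
    ((qpInclusion D).obj A ⟶ B) ≃ (A ⟶ red hEM B) where
  toFun f := ObjectProperty.homMk ⟨f.toHom, redSet_subset_pushSet hEM A.property f.mem⟩
  invFun g := ⟨g.hom.toHom, fun δ hδ => g.hom.mem δ (subset_redSet hEM _ hδ)⟩
  left_inv _ := rfl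
  right_inv _ := rfl

abbrev coreflective (hEM : EMCat D) : Coreflective (qpInclusion D) where
  R := Adjunction.rightAdjointOfEquiv (homEquivRed hEM) fun _ _ _ _ _ => rfl
  adj := Adjunction.adjunctionOfEquivRight _ _

end QObj

theorem FiltCat.isCofilteredOrEmpty {X : D} {Q : ProjFilt X} (hQ : Q.Reduced) :
    IsCofilteredOrEmpty (FiltCat Q) where
  cone_objs a b := by
    obtain ⟨δ, hδ, ⟨g₁, hg₁⟩, ⟨g₂, hg₂⟩⟩ := Q.directed' a.1 a.2 b.1 b.2
    exact ⟨⟨δ, hδ⟩, ⟨g₁, hg₁⟩, ⟨g₂, hg₂⟩, trivial⟩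
  cone_maps a b g g' := by
    obtain ⟨ε, hε, he, k, hk⟩ := hQ a.1 a.2
    have := he.1
    refine ⟨⟨ε, hε⟩, ⟨k, hk⟩, Subtype.ext ?_⟩
    change k ≫ g.1 = k ≫ g'.1
    rw [← cancel_epi ε.2, ← Category.assoc, ← Category.assoc, hk, g.2, g'.2]

theorem hasLimit_filtDiagram [HasLimits D] (hecwp : ECWP D) {X : D} {Q : ProjFilt X}
    (hQ : Q.Reduced) : HasLimit (FiltDiagram Q) := by
  obtain ⟨ι, Y, e, -, hcover⟩ := hecwp X
  have := FiltCat.isCofilteredOrEmpty hQ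
  let s : Set (FiltCat Q) :=
    Set.range fun i : {i : ι // (⟨Y i, e i⟩ : MorFrom X) ∈ Q.carrier} => ⟨⟨Y i, e i⟩, i.2⟩
  have : Small.{v} s := small_range _
  have : InitiallySmall.{v} (FiltCat Q) := by
    refine initiallySmall_of_small_weakly_initial_set s fun δ => ?_
    obtain ⟨ε, hε, he, k, hk⟩ := hQ δ.1 δ.2
    obtain ⟨i, φ, hφ⟩ := hcover ε.2 he
    have hi : (⟨Y i, e i⟩ : MorFrom X) ∈ Q.carrier :=
      Q.saturated' ε hε _ ⟨φ.inv, by rw [← hφ, Category.assoc, φ.hom_inv_id, Category.comp_id]⟩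
    exact ⟨_, ⟨⟨i, hi⟩, rfl⟩, ⟨⟨φ.hom ≫ k, by rw [← Category.assoc, hφ, hk]⟩⟩⟩
  have := hasLimitsOfShape_of_initiallySmall (FiltCat Q) D
  infer_instance

section Reflection

variable {X : D} {Q : ProjFilt X} (ℓ : LimitCone (FiltDiagram Q))

theorem dom_π_of_dom {δ δ' : FiltCat Q} (h : Dom δ.1 δ'.1) :
    Dom ⟨δ.1.1, ℓ.cone.π.app δ⟩ ⟨δ'.1.1, ℓ.cone.π.app δ'⟩ :=
  let ⟨k, hk⟩ := h
  ⟨k, cone_π_comp ℓ.cone k hk⟩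

def limitFilt : ProjFilt ℓ.cone.pt where
  carrier := {γ | ∃ δ : FiltCat Q, Dom ⟨δ.1.1, ℓ.cone.π.app δ⟩ γ}
  nonempty' :=
    let ⟨δ, hδ⟩ := Q.nonempty'
    ⟨_, ⟨δ, hδ⟩, Dom.refl _⟩
  directed' := by
    rintro γ₁ ⟨δ₁, hd₁⟩ γ₂ ⟨δ₂, hd₂⟩
    obtain ⟨δ, hδ, h₁, h₂⟩ := Q.directed' δ₁.1 δ₁.2 δ₂.1 δ₂.2
    exact ⟨_, ⟨⟨δ, hδ⟩, Dom.refl _⟩, (dom_π_of_dom ℓ h₁).trans hd₁, (dom_π_of_dom ℓ h₂).trans hd₂⟩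
  saturated' := by
    rintro γ₁ ⟨δ, hd⟩ γ₂ hd₂
    exact ⟨δ, hd.trans hd₂⟩

def toLimit : X ⟶ ℓ.cone.pt :=
  ℓ.isLimit.lift (filtCone Q)

theorem toLimit_π (δ : FiltCat Q) : toLimit ℓ ≫ ℓ.cone.π.app δ = δ.1.2 :=
  ℓ.isLimit.fac _ δ

theorem toLimit_π_assoc (δ : FiltCat Q) {Z : D} (h : δ.1.1 ⟶ Z) :
    toLimit ℓ ≫ ℓ.cone.π.app δ ≫ h = δ.1.2 ≫ h :=
  (Category.assoc _ _ _).symm.trans (congrArg (· ≫ h) (toLimit_π ℓ δ))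

theorem limitFilt_reduced (hQ : Q.Reduced) : (limitFilt ℓ).Reduced := by
  rintro γ ⟨δ, hd⟩
  obtain ⟨ε, hε, he, hεδ⟩ := hQ δ.1 δ.2
  have he' : ExtremalEpi (ℓ.cone.π.app ⟨ε, hε⟩) := he.of_comp (toLimit_π ℓ ⟨ε, hε⟩)
  exact ⟨_, ⟨⟨ε, hε⟩, Dom.refl _⟩, he', (dom_π_of_dom ℓ (δ := ⟨ε, hε⟩) hεδ).trans hd⟩

def restrictLimitFiltCone (c : Cone (FiltDiagram (limitFilt ℓ))) : Cone (FiltDiagram Q) where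
  pt := c.pt
  π :=
    { app δ := c.π.app ⟨_, δ, Dom.refl _⟩
      naturality δ δ' k := by
        dsimp [FiltDiagram]
        rw [Category.id_comp]
        exact (cone_π_comp c (a := ⟨_, δ, Dom.refl _⟩) (b := ⟨_, δ', Dom.refl _⟩) k.1
          (cone_π_comp ℓ.cone k.1 k.2)).symm }

def isLimitLimitFilt : IsLimit (filtCone (limitFilt ℓ)) where
  lift c := ℓ.isLimit.lift (restrictLimitFiltCone ℓ c)
  fac c γ := by
    obtain ⟨⟨Z, g⟩, hγ⟩ := γ
    obtain ⟨δ, h, hh⟩ := id hγ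
    have hδ : ℓ.isLimit.lift (restrictLimitFiltCone ℓ c) ≫ ℓ.cone.π.app δ =
        c.π.app ⟨_, δ, Dom.refl _⟩ :=
      ℓ.isLimit.fac _ δ
    change ℓ.isLimit.lift (restrictLimitFiltCone ℓ c) ≫ g = _
    rw [← cone_π_comp c (a := ⟨_, δ, Dom.refl _⟩) (b := ⟨⟨Z, g⟩, hγ⟩) h hh, ← hδ]
    exact (congrArg _ hh.symm).trans (Category.assoc _ _ _).symm
  uniq c m hm := ℓ.isLimit.hom_ext fun δ =>
    (hm ⟨_, δ, Dom.refl _⟩).trans (ℓ.isLimit.fac (restrictLimitFiltCone ℓ c) δ).symm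

def toLimitHom : (⟨X, Q⟩ : PObj D) ⟶ ⟨ℓ.cone.pt, limitFilt ℓ⟩ :=
  ⟨toLimit ℓ, fun ⟨_, _⟩ ⟨δ, h, hh⟩ =>
    Q.saturated' δ.1 δ.2 _ ⟨h, (toLimit_π_assoc ℓ δ h).symm.trans (congrArg _ hh)⟩⟩

variable {K : PObj D} (hK : IsLimit (filtCone K.filt))

def extensionCone (f : (⟨X, Q⟩ : PObj D) ⟶ K) : Cone (FiltDiagram K.filt) where
  pt := ℓ.cone.pt
  π :=
    { app α := ℓ.cone.π.app ⟨_, f.mem α.1 α.2⟩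
      naturality α α' k := by
        dsimp [FiltDiagram]
        rw [Category.id_comp]
        exact (cone_π_comp ℓ.cone (a := ⟨_, f.mem α.1 α.2⟩) (b := ⟨_, f.mem α'.1 α'.2⟩) k.1
          ((Category.assoc _ _ _).trans (congrArg _ k.2))).symm }

def extension (f : (⟨X, Q⟩ : PObj D) ⟶ K) : ℓ.cone.pt ⟶ K.base :=
  hK.lift (extensionCone ℓ f)

theorem extension_π (f : (⟨X, Q⟩ : PObj D) ⟶ K) (α : FiltCat K.filt) :
    extension ℓ hK f ≫ α.1.2 = ℓ.cone.π.app ⟨_, f.mem α.1 α.2⟩ :=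
  hK.fac _ α

theorem toLimit_extension (f : (⟨X, Q⟩ : PObj D) ⟶ K) :
    toLimit ℓ ≫ extension ℓ hK f = f.toHom :=
  hK.hom_ext fun α =>
    (Category.assoc _ _ _).trans ((congrArg _ (extension_π ℓ hK f α)).trans (toLimit_π ℓ _))

theorem eq_extension (g : (⟨ℓ.cone.pt, limitFilt ℓ⟩ : PObj D) ⟶ K) :
    g.toHom = extension ℓ hK (toLimitHom ℓ ≫ g) :=
  hK.hom_ext fun α => by
    obtain ⟨δ, h, hh⟩ := g.mem α.1 α.2
    have hδ : δ.1.2 ≫ h = (toLimit ℓ ≫ g.toHom) ≫ α.1.2 :=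
      (toLimit_π_assoc ℓ δ h).symm.trans ((congrArg _ hh).trans (Category.assoc _ _ _).symm)
    exact hh.symm.trans ((cone_π_comp ℓ.cone (b := ⟨_, (toLimitHom ℓ ≫ g).mem α.1 α.2⟩) h hδ).trans
      (extension_π ℓ hK _ α).symm)

def limitHomEquiv : ((⟨ℓ.cone.pt, limitFilt ℓ⟩ : PObj D) ⟶ K) ≃ ((⟨X, Q⟩ : PObj D) ⟶ K) where
  toFun g := toLimitHom ℓ ≫ g
  invFun f := ⟨extension ℓ hK f, fun α hα =>
    ⟨⟨_, f.mem α hα⟩, 𝟙 _, (Category.comp_id _).trans (extension_π ℓ hK f ⟨α, hα⟩).symm⟩⟩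
  left_inv g := PObj.hom_ext (eq_extension ℓ hK g).symm
  right_inv f := PObj.hom_ext (toLimit_extension ℓ hK f)

end Reflection

namespace KObj

instance : (kqInclusion D).Full := ObjectProperty.full_ι _
instance : (kqInclusion D).Faithful := ObjectProperty.faithful_ι _

variable [HasLimits D]

def limitConeOf (hecwp : ECWP D) (A : QObj D) : LimitCone (FiltDiagram A.obj.filt) :=
  (hasLimit_filtDiagram hecwp A.property).exists_limit.some

def reflect (hecwp : ECWP D) (A : QObj D) : KObj D :=
  ⟨⟨⟨_, limitFilt (limitConeOf hecwp A)⟩, limitFilt_reduced _ A.property⟩,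
    ⟨isLimitLimitFilt _⟩⟩

def homEquivReflect (hecwp : ECWP D) (A : QObj D) (K : KObj D) :
    (reflect hecwp A ⟶ K) ≃ (A ⟶ (kqInclusion D).obj K) :=
  (ObjectProperty.fullyFaithfulι _).homEquiv.trans <|
    (ObjectProperty.fullyFaithfulι _).homEquiv.trans <|
      (limitHomEquiv _ (K := K.obj.obj) (Classical.choice K.property)).trans
        (ObjectProperty.fullyFaithfulι _).homEquiv.symm

abbrev reflective (hecwp : ECWP D) : Reflective (kqInclusion D) where
  L := Adjunction.leftAdjointOfEquiv (homEquivReflect hecwp) fun _ _ _ _ _ => by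
    apply ObjectProperty.hom_ext
    exact PObj.hom_ext (Category.assoc _ _ _).symm
  adj := Adjunction.adjunctionOfEquivLeft _ _

end KObj

end

/-- `KD` is complete and cocomplete. -/
theorem kobj_complete_cocomplete [Limits.HasLimits D] [Limits.HasColimits D]
    (hecwp : ECWP D) (hEM : EMCat D) :
    Limits.HasLimits (KObj D) ∧ Limits.HasColimits (KObj D) := by
  have := PObj.hasLimits (D := D)
  have := PObj.hasColimits (D := D)
  have := QObj.coreflective hEM
  have : HasLimits (QObj D) := hasLimits_of_coreflective (qpInclusion D)
  have : HasColimits (QObj D) := hasColimits_of_coreflective (qpInclusion D)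
  have := KObj.reflective hecwp
  exact ⟨hasLimits_of_reflective (kqInclusion D), hasColimits_of_reflective (kqInclusion D)⟩

end FilteredCats
end
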